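/- arXiv:math/0405476 — 5 statements merged into one kernel-verified Lean document; each statement's English description precedes it below -/
import Mathlib

section
/- The number of 3×3 magic squares (matrices with nonnegative integer entries whose rows, columns, and both main diagonals all sum to s) equals (2/9)s² + (2/3)s + 1 if 3 divides s, and 0 otherwise. -/
def IsMagic3 (s : ℕ) (M : Matrix (Fin 3) (Fin 3) ℕ) : Prop :=
  (∀ i, ∑ j, M i j = s) ∧ (∀ j, ∑ i, M i j = s) ∧
  (∑ i, M i i = s) ∧ (∑ i, M i i.rev = s)

namespace Magic3Aux

def mkMat (m a c : ℕ) : Matrix (Fin 3) (Fin 3) ℕ :=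
  !![a, 3*m - a - c, c;
     m + c - a, m, m + a - c;
     2*m - c, a + c - m, 2*m - a]

lemma rev0 : (0 : Fin 3).rev = 2 := rfl
lemma rev1 : (1 : Fin 3).rev = 1 := rfl
lemma rev2 : (2 : Fin 3).rev = 0 := rfl

lemma mkMat_magic (m a c : ℕ) (h1 : m ≤ a + c) (h2 : a + c ≤ 3*m)
    (h3 : a ≤ c + m) (h4 : c ≤ a + m) : IsMagic3 (3*m) (mkMat m a c) := by
  refine ⟨fun i => ?_, fun j => ?_, ?_, ?_⟩
  · fin_cases i <;> (simp [mkMat, Fin.sum_univ_three, Fin.last] <;> omega)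
  · fin_cases j <;> (simp [mkMat, Fin.sum_univ_three, Fin.last] <;> omega)
  · simp [mkMat, Fin.sum_univ_three, Fin.last] <;> omega
  · simp [mkMat, Fin.sum_univ_three, Fin.last, rev0, rev1, rev2] <;> omega

lemma magic_eq {m : ℕ} {M : Matrix (Fin 3) (Fin 3) ℕ} (h : IsMagic3 (3*m) M) :
    M = mkMat m (M 0 0) (M 0 2) ∧ m ≤ M 0 0 + M 0 2 ∧ M 0 0 + M 0 2 ≤ 3*m ∧
    M 0 0 ≤ M 0 2 + m ∧ M 0 2 ≤ M 0 0 + m := by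
  obtain ⟨hr, hc, hdg, ha⟩ := h
  have r0 := hr 0; have r1 := hr 1; have r2 := hr 2
  have c0 := hc 0; have c1 := hc 1; have c2 := hc 2
  simp only [Fin.sum_univ_three, rev0, rev1, rev2] at r0 r1 r2 c0 c1 c2 hdg ha
  refine ⟨?_, by omega, by omega, by omega, by omega⟩
  funext i j
  fin_cases i <;> fin_cases j <;> (simp [mkMat, Fin.last] <;> omega)

lemma magic_dvd {s : ℕ} {M : Matrix (Fin 3) (Fin 3) ℕ} (h : IsMagic3 s M) : 3 ∣ s := by
  obtain ⟨hr, hc, hdg, ha⟩ := h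
  have r1 := hr 1
  have c1 := hc 1
  have t0 := hr 0; have t2 := hr 2
  simp only [Fin.sum_univ_three, rev0, rev1, rev2] at r1 c1 hdg ha t0 t2
  omega

def toSq (m : ℕ) : (Fin (m+1) × Fin (m+1)) ⊕ (Fin m × Fin m) →
    {M : Matrix (Fin 3) (Fin 3) ℕ // IsMagic3 (3*m) M}
  | Sum.inl (p, q) => ⟨mkMat m (p + q) (p + m - q),
      mkMat_magic _ _ _ (by have := p.2; have := q.2; omega)
        (by have := p.2; have := q.2; omega)
        (by have := p.2; have := q.2; omega)
        (by have := p.2; have := q.2; omega)⟩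
  | Sum.inr (p, q) => ⟨mkMat m (p + q + 1) (p + m - q),
      mkMat_magic _ _ _ (by have := p.2; have := q.2; omega)
        (by have := p.2; have := q.2; omega)
        (by have := p.2; have := q.2; omega)
        (by have := p.2; have := q.2; omega)⟩

lemma toSq_bij (m : ℕ) : Function.Bijective (toSq m) := by
  constructor
  · rintro (⟨p, q⟩ | ⟨p, q⟩) (⟨p', q'⟩ | ⟨p', q'⟩) hxy <;>
    · have h00 := congrFun (congrFun (congrArg Subtype.val hxy) 0) 0
      have h02 := congrFun (congrFun (congrArg Subtype.val hxy) 0) 2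
      simp [toSq, mkMat] at h00 h02 ⊢
      have hp := p.2; have hq := q.2; have hp' := p'.2; have hq' := q'.2
      first
      | (constructor <;> (apply Fin.ext; omega))
      | omega
  · rintro ⟨M, hM⟩
    obtain ⟨hEq, h1, h2, h3, h4⟩ := magic_eq hM
    set a := M 0 0 with ha'
    set c := M 0 2 with hc'
    rcases Nat.even_or_odd (a + c + m) with ⟨k, hk⟩ | ⟨k, hk⟩
    · have hp : (a + c - m)/2 + (a + m - c)/2 = a := by omega
      have hq : (a + c - m)/2 + m - (a + m - c)/2 = c := by omega
      refine ⟨Sum.inl (⟨(a + c - m)/2, by omega⟩, ⟨(a + m - c)/2, by omega⟩),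
        Subtype.ext ?_⟩
      show mkMat m ((a + c - m)/2 + (a + m - c)/2) ((a + c - m)/2 + m - (a + m - c)/2) = M
      rw [hp, hq]; exact hEq.symm
    · have hp : (a + c - m)/2 + (a + m - c)/2 + 1 = a := by omega
      have hq : (a + c - m)/2 + m - (a + m - c)/2 = c := by omega
      refine ⟨Sum.inr (⟨(a + c - m)/2, by omega⟩, ⟨(a + m - c)/2, by omega⟩),
        Subtype.ext ?_⟩
      show mkMat m ((a + c - m)/2 + (a + m - c)/2 + 1) ((a + c - m)/2 + m - (a + m - c)/2) = M
      rw [hp, hq]; exact hEq.symm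

end Magic3Aux

theorem magic3_count (s : ℕ) :
    (Nat.card {M : Matrix (Fin 3) (Fin 3) ℕ // IsMagic3 s M} : ℚ) =
      if 3 ∣ s then (2/9) * (s:ℚ)^2 + (2/3) * (s:ℚ) + 1 else 0 := by
  by_cases hd : 3 ∣ s
  · obtain ⟨m, rfl⟩ := hd
    rw [if_pos ⟨m, rfl⟩]
    have hcard : Nat.card {M : Matrix (Fin 3) (Fin 3) ℕ // IsMagic3 (3*m) M}
        = (m+1)*(m+1) + m*m := by
      rw [← Nat.card_eq_of_bijective _ (Magic3Aux.toSq_bij m)]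
      simp [Nat.card_sum, Nat.card_prod, Nat.card_eq_fintype_card]
    rw [hcard]; push_cast; ring
  · rw [if_neg hd]
    have : IsEmpty {M : Matrix (Fin 3) (Fin 3) ℕ // IsMagic3 s M} :=
      ⟨fun ⟨_, hM⟩ => hd (Magic3Aux.magic_dvd hM)⟩
    simp
end

section
/- Every 3×3 magic square is a nonnegative integer linear combination of the five squares: the all-ones matrix and the four matrices obtained from [[1,0,2],[2,1,0],[0,2,1]] by the symmetries reflecting rows/columns (explicitly: [[1,0,2],[2,1,0],[0,2,1]], [[2,0,1],[0,1,2],[1,2,0]], [[0,2,1],[2,1,0],[1,0,2]], [[1,2,0],[0,1,2],[2,0,1]], and the all-ones matrix). -/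
set_option maxHeartbeats 1000000 in
theorem magic3_aux (m00 m01 m02 m10 m11 m12 m20 m21 m22 s : ℕ)
    (h1 : m00 + m01 + m02 = s) (h2 : m10 + m11 + m12 = s)
    (h3 : m20 + m21 + m22 = s) (h4 : m00 + m10 + m20 = s)
    (h5 : m01 + m11 + m21 = s) (h6 : m02 + m12 + m22 = s)
    (h7 : m00 + m11 + m22 = s) (h8 : m02 + m11 + m20 = s) :
    ∃ a b c d e : ℕ,
      !![m00,m01,m02; m10,m11,m12; m20,m21,m22] =
          a • !![1,0,2; 2,1,0; 0,2,1] + b • !![2,0,1; 0,1,2; 1,2,0] +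
          c • !![0,2,1; 2,1,0; 1,0,2] + d • !![1,2,0; 0,1,2; 2,0,1] +
          e • !![1,1,1; 1,1,1; 1,1,1] := by
  rcases le_or_gt m11 m00 with hcase | hcase
  · obtain ⟨A, hA⟩ : ∃ x, x = (m10 - min m10 m01) / 2 := ⟨_, rfl⟩
    obtain ⟨B, hB⟩ : ∃ x, x = m00 - m11 := ⟨_, rfl⟩
    obtain ⟨D, hD⟩ : ∃ x, x = (m01 - min m10 m01) / 2 := ⟨_, rfl⟩
    obtain ⟨E, hE⟩ : ∃ x, x = min m10 m01 := ⟨_, rfl⟩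
    refine ⟨A, B, 0, D, E, ?_⟩
    ext i j
    fin_cases i <;> fin_cases j <;>
      simp [Matrix.add_apply, Matrix.smul_apply, smul_eq_mul,
        Matrix.vecHead, Matrix.vecTail] <;> omega
  · obtain ⟨A, hA⟩ : ∃ x, x = (m21 - min m12 m21) / 2 := ⟨_, rfl⟩
    obtain ⟨C, hC⟩ : ∃ x, x = m11 - m00 := ⟨_, rfl⟩
    obtain ⟨D, hD⟩ : ∃ x, x = (m12 - min m12 m21) / 2 := ⟨_, rfl⟩
    obtain ⟨E, hE⟩ : ∃ x, x = min m12 m21 := ⟨_, rfl⟩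
    refine ⟨A, 0, C, D, E, ?_⟩
    ext i j
    fin_cases i <;> fin_cases j <;>
      simp [Matrix.add_apply, Matrix.smul_apply, smul_eq_mul,
        Matrix.vecHead, Matrix.vecTail] <;> omega

/-- Every 3×3 magic square is a nonnegative integer combination of the five
Hilbert basis elements. -/
theorem magic3_hilbert_basis (M : Matrix (Fin 3) (Fin 3) ℕ) (s : ℕ)
    (h : IsMagic3 s M) :
    ∃ a b c d e : ℕ,
      M = a • !![1,0,2; 2,1,0; 0,2,1] + b • !![2,0,1; 0,1,2; 1,2,0] +
          c • !![0,2,1; 2,1,0; 1,0,2] + d • !![1,2,0; 0,1,2; 2,0,1] +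
          e • !![1,1,1; 1,1,1; 1,1,1] := by
  obtain ⟨hr, hc, hd, ha⟩ := h
  have hr0 := hr 0
  have hr1 := hr 1
  have hr2 := hr 2
  have hc0 := hc 0
  have hc1 := hc 1
  have hc2 := hc 2
  simp only [Fin.sum_univ_three] at hr0 hr1 hr2 hc0 hc1 hc2 hd ha
  have ha' : M 0 2 + M 1 1 + M 2 0 = s := by
    have : ((0 : Fin 3).rev = 2) ∧ ((1 : Fin 3).rev = 1) ∧ ((2 : Fin 3).rev = 0) := by decide
    rw [this.1, this.2.1, this.2.2] at ha
    omega
  rw [Matrix.eta_fin_three M]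
  exact magic3_aux _ _ _ _ _ _ _ _ _ s hr0 hr1 hr2 hc0 hc1 hc2 hd ha'
end

section
/- The number of magic labelings of the complete graph K_4 with magic sum r equals (1/2)r² + (3/2)r + 1. -/
open Finset

private def lab4 (r a b : ℕ) : Sym2 (Fin 4) → ℕ := fun e =>
  if e.IsDiag then 0
  else if e = s(0,1) ∨ e = s(2,3) then a
  else if e = s(0,2) ∨ e = s(1,3) then b
  else r - a - b

private lemma lab4_diag (r a b : ℕ) (e : Sym2 (Fin 4)) (he : e.IsDiag) :
    lab4 r a b e = 0 := by simp [lab4, he]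

private lemma lab4_01 (r a b : ℕ) : lab4 r a b s(0,1) = a := by
  simp only [lab4]; rw [if_neg (by decide), if_pos (by decide)]
private lemma lab4_23 (r a b : ℕ) : lab4 r a b s(2,3) = a := by
  simp only [lab4]; rw [if_neg (by decide), if_pos (by decide)]
private lemma lab4_02 (r a b : ℕ) : lab4 r a b s(0,2) = b := by
  simp only [lab4]; rw [if_neg (by decide), if_neg (by decide), if_pos (by decide)]
private lemma lab4_13 (r a b : ℕ) : lab4 r a b s(1,3) = b := by
  simp only [lab4]; rw [if_neg (by decide), if_neg (by decide), if_pos (by decide)]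
private lemma lab4_03 (r a b : ℕ) : lab4 r a b s(0,3) = r - a - b := by
  simp only [lab4]; rw [if_neg (by decide), if_neg (by decide), if_neg (by decide)]
private lemma lab4_12 (r a b : ℕ) : lab4 r a b s(1,2) = r - a - b := by
  simp only [lab4]; rw [if_neg (by decide), if_neg (by decide), if_neg (by decide)]

private lemma sym2_fin4_cases : ∀ e : Sym2 (Fin 4),
    e = s(0,0) ∨ e = s(1,1) ∨ e = s(2,2) ∨ e = s(3,3) ∨
    e = s(0,1) ∨ e = s(0,2) ∨ e = s(0,3) ∨ e = s(1,2) ∨ e = s(1,3) ∨ e = s(2,3) := by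
  decide

private lemma lab4_sum (r a b : ℕ) (hab : a + b ≤ r) (v : Fin 4) :
    ∑ w, lab4 r a b s(v, w) = r := by
  rcases (by decide : ∀ v : Fin 4, v = 0 ∨ v = 1 ∨ v = 2 ∨ v = 3) v with rfl | rfl | rfl | rfl <;>
    rw [Fin.sum_univ_four]
  · rw [lab4_diag r a b s(0,0) (by simp), lab4_01, lab4_02, lab4_03]; omega
  · rw [show (s(1,0) : Sym2 (Fin 4)) = s(0,1) from Sym2.eq_swap,
      lab4_diag r a b s(1,1) (by simp), lab4_01, lab4_12, lab4_13]; omega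
  · rw [show (s(2,0) : Sym2 (Fin 4)) = s(0,2) from Sym2.eq_swap,
      show (s(2,1) : Sym2 (Fin 4)) = s(1,2) from Sym2.eq_swap,
      lab4_diag r a b s(2,2) (by simp), lab4_02, lab4_12, lab4_23]; omega
  · rw [show (s(3,0) : Sym2 (Fin 4)) = s(0,3) from Sym2.eq_swap,
      show (s(3,1) : Sym2 (Fin 4)) = s(1,3) from Sym2.eq_swap,
      show (s(3,2) : Sym2 (Fin 4)) = s(2,3) from Sym2.eq_swap,
      lab4_diag r a b s(3,3) (by simp), lab4_03, lab4_13, lab4_23]; omega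

private def K4Equiv (r : ℕ) :
    {ℓ : Sym2 (Fin 4) → ℕ //
        (∀ e : Sym2 (Fin 4), e.IsDiag → ℓ e = 0) ∧ ∀ v, ∑ w, ℓ s(v, w) = r} ≃
      {p : ℕ × ℕ // p.1 + p.2 ≤ r} where
  toFun ℓ := ⟨(ℓ.1 s(0,1), ℓ.1 s(0,2)), by
    obtain ⟨ℓ, hd, hs⟩ := ℓ
    show ℓ s(0,1) + ℓ s(0,2) ≤ r
    have h0 := hs 0
    rw [Fin.sum_univ_four, hd s(0,0) (by simp)] at h0
    omega⟩
  invFun p := ⟨lab4 r p.1.1 p.1.2,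
    fun e he => lab4_diag r p.1.1 p.1.2 e he, lab4_sum r p.1.1 p.1.2 p.2⟩
  left_inv := by
    rintro ⟨ℓ, hd, hs⟩
    apply Subtype.ext
    funext e
    show lab4 r (ℓ s(0,1)) (ℓ s(0,2)) e = ℓ e
    have h0 := hs 0
    have h1 := hs 1
    have h2 := hs 2
    have h3 := hs 3
    simp only [Fin.sum_univ_four] at h0 h1 h2 h3
    simp only [show (s(1,0) : Sym2 (Fin 4)) = s(0,1) from Sym2.eq_swap,
      show (s(2,0) : Sym2 (Fin 4)) = s(0,2) from Sym2.eq_swap,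
      show (s(2,1) : Sym2 (Fin 4)) = s(1,2) from Sym2.eq_swap,
      show (s(3,0) : Sym2 (Fin 4)) = s(0,3) from Sym2.eq_swap,
      show (s(3,1) : Sym2 (Fin 4)) = s(1,3) from Sym2.eq_swap,
      show (s(3,2) : Sym2 (Fin 4)) = s(2,3) from Sym2.eq_swap] at h0 h1 h2 h3
    rw [hd s(0,0) (by simp)] at h0
    rw [hd s(1,1) (by simp)] at h1
    rw [hd s(2,2) (by simp)] at h2
    rw [hd s(3,3) (by simp)] at h3
    rcases sym2_fin4_cases e with rfl | rfl | rfl | rfl | rfl | rfl | rfl | rfl | rfl | rfl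
    · rw [lab4_diag _ _ _ _ (by simp), hd s(0,0) (by simp)]
    · rw [lab4_diag _ _ _ _ (by simp), hd s(1,1) (by simp)]
    · rw [lab4_diag _ _ _ _ (by simp), hd s(2,2) (by simp)]
    · rw [lab4_diag _ _ _ _ (by simp), hd s(3,3) (by simp)]
    · rw [lab4_01]
    · rw [lab4_02]
    · rw [lab4_03]; omega
    · rw [lab4_12]; omega
    · rw [lab4_13]; omega
    · rw [lab4_23]; omega
  right_inv := by
    rintro ⟨⟨a, b⟩, hab⟩
    apply Subtype.ext
    show (lab4 r a b s(0,1), lab4 r a b s(0,2)) = (a, b)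
    rw [lab4_01, lab4_02]

private lemma card_filter_aux (r : ℕ) :
    2 * ((range (r+1) ×ˢ range (r+1)).filter (fun p => p.1 + p.2 ≤ r)).card =
      (r + 1) * (r + 2) := by
  induction r with
  | zero => decide
  | succ n ih =>
    have key : (range (n+2) ×ˢ range (n+2)).filter (fun p => p.1 + p.2 ≤ n + 1) =
        ((range (n+1) ×ˢ range (n+1)).filter (fun p => p.1 + p.2 ≤ n)) ∪
          (range (n+2)).image (fun i => (i, n + 1 - i)) := by
      ext ⟨x, y⟩
      simp only [mem_filter, mem_product, mem_range, mem_union, mem_image]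
      constructor
      · rintro ⟨⟨hx, hy⟩, hxy⟩
        rcases Nat.lt_or_ge (x + y) (n + 1) with h | h
        · left; omega
        · right; exact ⟨x, by omega, by rw [Prod.mk.injEq]; omega⟩
      · rintro (⟨⟨hx, hy⟩, hxy⟩ | ⟨i, hi, h⟩)
        · exact ⟨⟨by omega, by omega⟩, by omega⟩
        · rw [Prod.mk.injEq] at h
          omega
    have hinj : Function.Injective (fun i : ℕ => (i, n + 1 - i)) := by
      intro i j hij
      simpa using congrArg Prod.fst hij
    have hdisj : Disjoint ((range (n+1) ×ˢ range (n+1)).filter (fun p => p.1 + p.2 ≤ n))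
        ((range (n+2)).image (fun i => (i, n + 1 - i))) := by
      rw [Finset.disjoint_left]
      rintro ⟨x, y⟩ hx hy
      simp only [mem_filter, mem_product, mem_range] at hx
      simp only [mem_image] at hy
      obtain ⟨i, hi, h⟩ := hy
      rw [Prod.mk.injEq] at h
      omega
    rw [show n + 1 + 1 = n + 2 from rfl, key, Finset.card_union_of_disjoint hdisj,
      Finset.card_image_of_injective _ hinj, Finset.card_range]
    have expand : (n + 1 + 1) * (n + 1 + 2) = (n + 1) * (n + 2) + 2 * (n + 2) := by ring
    rw [expand, Nat.mul_add, ih]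

private lemma card_pairs (r : ℕ) :
    2 * Nat.card {p : ℕ × ℕ // p.1 + p.2 ≤ r} = (r + 1) * (r + 2) := by
  have e : {p : ℕ × ℕ // p.1 + p.2 ≤ r} ≃
      ((range (r+1) ×ˢ range (r+1)).filter (fun p => p.1 + p.2 ≤ r) : Finset (ℕ × ℕ)) :=
    { toFun := fun p => ⟨p.1, by
        simp only [mem_filter, mem_product, mem_range]
        have := p.2; omega⟩
      invFun := fun p => ⟨p.1, by
        have := p.2; simp only [mem_filter, mem_product, mem_range] at this; omega⟩
      left_inv := fun p => rfl
      right_inv := fun p => rfl }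
  rw [Nat.card_congr e, Nat.card_eq_finsetCard]
  exact card_filter_aux r

/-- The number of magic labelings of the complete graph `K_4` with magic sum `r`
is `(1/2)r² + (3/2)r + 1`. -/
theorem K4_magic_count (r : ℕ) :
    (Nat.card {ℓ : Sym2 (Fin 4) → ℕ //
        (∀ e : Sym2 (Fin 4), e.IsDiag → ℓ e = 0) ∧ ∀ v, ∑ w, ℓ s(v, w) = r} : ℚ) =
      (1/2) * r^2 + (3/2) * r + 1 := by
  have h := card_pairs r
  rw [← Nat.card_congr (K4Equiv r)] at h
  have h' : (2 : ℚ) * (Nat.card {ℓ : Sym2 (Fin 4) → ℕ //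
      (∀ e : Sym2 (Fin 4), e.IsDiag → ℓ e = 0) ∧ ∀ v, ∑ w, ℓ s(v, w) = r} : ℚ) =
      ((r : ℚ) + 1) * ((r : ℚ) + 2) := by exact_mod_cast congrArg (Nat.cast : ℕ → ℚ) h
  nlinarith [h']
end

section
/- The number of 3×3 symmetric matrices with nonnegative integer entries whose rows all sum to r equals (1/4)r³ + (9/8)r² + (7/4)r + 1 if r is even, and (1/4)r³ + (9/8)r² + (7/4)r + 7/8 if r is odd. -/
/-!
A symmetric matrix with row sums `r` is determined by its off-diagonal entries `a, b, c`, and these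
range exactly over the triples with `a + b, a + c, b + c ≤ r`. Sorting such triples for `r + 2` by
their first vanishing coordinate, and lowering the nonzero coordinates by one, gives
`S (r + 2) = T (r + 2) + T (r + 1) + T r + S r`, where `T n = (n + 1) (n + 2) / 2` counts the pairs
with sum `≤ n`. The closed form follows by induction in steps of two.
-/

open Finset

def pairsSumLe (n : ℕ) : Finset (ℕ × ℕ) :=
  (range (n + 1)).biUnion antidiagonal

@[simp]
lemma mem_pairsSumLe {n : ℕ} {p : ℕ × ℕ} : p ∈ pairsSumLe n ↔ p.1 + p.2 ≤ n := by
  simp [pairsSumLe]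

lemma two_mul_card_pairsSumLe (n : ℕ) : 2 * #(pairsSumLe n) = (n + 1) * (n + 2) := by
  have hdisj : (range (n + 1) : Set ℕ).PairwiseDisjoint antidiagonal := fun s _ t _ hst =>
    disjoint_left.2 fun p hs ht => hst ((mem_antidiagonal.1 hs).symm.trans (mem_antidiagonal.1 ht))
  have hsum : ∀ m, 2 * ∑ s ∈ range (m + 1), (s + 1) = (m + 1) * (m + 2) := by
    intro m
    induction m with
    | zero => rfl
    | succ m ih => rw [sum_range_succ, mul_add, ih]; ring
  rw [pairsSumLe, card_biUnion hdisj, ← hsum]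
  simp only [Nat.card_antidiagonal]

def triplesPairwiseSumLe (r : ℕ) : Finset (ℕ × ℕ × ℕ) :=
  (range (r + 1) ×ˢ range (r + 1) ×ˢ range (r + 1)).filter
    fun p => p.1 + p.2.1 ≤ r ∧ p.1 + p.2.2 ≤ r ∧ p.2.1 + p.2.2 ≤ r

@[simp]
lemma mem_triplesPairwiseSumLe {r : ℕ} {p : ℕ × ℕ × ℕ} :
    p ∈ triplesPairwiseSumLe r ↔ p.1 + p.2.1 ≤ r ∧ p.1 + p.2.2 ≤ r ∧ p.2.1 + p.2.2 ≤ r := by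
  simp only [triplesPairwiseSumLe, mem_filter, mem_product, mem_range]
  omega

lemma card_triplesPairwiseSumLe_add_two (r : ℕ) :
    #(triplesPairwiseSumLe (r + 2)) =
      #(pairsSumLe (r + 2)) + #(pairsSumLe (r + 1)) + #(pairsSumLe r) +
        #(triplesPairwiseSumLe r) := by
  set S := triplesPairwiseSumLe (r + 2)
  have hS := card_filter_add_card_filter_not (s := S) (fun p => p.1 = 0)
  have hS' := card_filter_add_card_filter_not (s := S.filter fun p => ¬p.1 = 0)
    (fun p => p.2.1 = 0)
  have hS'' := card_filter_add_card_filter_not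
    (s := (S.filter fun p => ¬p.1 = 0).filter fun p => ¬p.2.1 = 0) (fun p => p.2.2 = 0)
  have h₁ : #(S.filter fun p => p.1 = 0) = #(pairsSumLe (r + 2)) :=
    card_nbij' (fun p => (p.2.1, p.2.2)) (fun q => (0, q.1, q.2))
      (by simp [Set.MapsTo, S]; omega) (by simp [Set.MapsTo, S]; omega)
      (by simp [Set.LeftInvOn, S]; omega) (by simp [Set.LeftInvOn])
  have h₂ : #((S.filter fun p => ¬p.1 = 0).filter fun p => p.2.1 = 0) = #(pairsSumLe (r + 1)) :=
    card_nbij' (fun p => (p.1 - 1, p.2.2)) (fun q => (q.1 + 1, 0, q.2))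
      (by simp [Set.MapsTo, S]; omega) (by simp [Set.MapsTo, S]; omega)
      (by simp [Set.LeftInvOn, S]; omega) (by simp [Set.LeftInvOn])
  have h₃ : #(((S.filter fun p => ¬p.1 = 0).filter fun p => ¬p.2.1 = 0).filter
      fun p => p.2.2 = 0) = #(pairsSumLe r) :=
    card_nbij' (fun p => (p.1 - 1, p.2.1 - 1)) (fun q => (q.1 + 1, q.2 + 1, 0))
      (by simp [Set.MapsTo, S]; omega) (by simp [Set.MapsTo, S]; omega)
      (by simp [Set.LeftInvOn, S]; omega) (by simp [Set.LeftInvOn])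
  have h₄ : #(((S.filter fun p => ¬p.1 = 0).filter fun p => ¬p.2.1 = 0).filter
      fun p => ¬p.2.2 = 0) = #(triplesPairwiseSumLe r) :=
    card_nbij' (fun p => (p.1 - 1, p.2.1 - 1, p.2.2 - 1))
      (fun q => (q.1 + 1, q.2.1 + 1, q.2.2 + 1))
      (by simp [Set.MapsTo, S]; omega) (by simp [Set.MapsTo, S]; omega)
      (by simp [Set.LeftInvOn, S]; omega) (by simp [Set.LeftInvOn])
  omega

lemma eight_mul_card_triplesPairwiseSumLe (r : ℕ) :
    8 * #(triplesPairwiseSumLe r) = 2 * r ^ 3 + 9 * r ^ 2 + 14 * r + if Even r then 8 else 7 := by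
  induction r using Nat.twoStepInduction with
  | zero => decide
  | one => decide
  | more r ih _ =>
    have h₂ := two_mul_card_pairsSumLe (r + 2)
    have h₁ := two_mul_card_pairsSumLe (r + 1)
    have h₀ := two_mul_card_pairsSumLe r
    have hpar : Even (r + 2) ↔ Even r := by simp [Nat.even_add]
    rw [card_triplesPairwiseSumLe_add_two]
    split_ifs at ih ⊢ <;> grind

def symmetricOfOffDiag (r : ℕ) (p : ℕ × ℕ × ℕ) : Matrix (Fin 3) (Fin 3) ℕ :=
  !![r - p.1 - p.2.1, p.1, p.2.1;
     p.1, r - p.1 - p.2.2, p.2.2;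
     p.2.1, p.2.2, r - p.2.1 - p.2.2]

lemma offDiag_mem_and_eq_symmetricOfOffDiag {r : ℕ} {M : Matrix (Fin 3) (Fin 3) ℕ}
    (hM : M.IsSymm) (hr : ∀ i, ∑ j, M i j = r) :
    (M 0 1, M 0 2, M 1 2) ∈ triplesPairwiseSumLe r ∧
      M = symmetricOfOffDiag r (M 0 1, M 0 2, M 1 2) := by
  have h₀ := hr 0
  have h₁ := hr 1
  have h₂ := hr 2
  simp only [Fin.sum_univ_three] at h₀ h₁ h₂
  have s₁₀ : M 1 0 = M 0 1 := hM.apply 0 1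
  have s₂₀ : M 2 0 = M 0 2 := hM.apply 0 2
  have s₂₁ : M 2 1 = M 1 2 := hM.apply 1 2
  refine ⟨by simp only [mem_triplesPairwiseSumLe]; omega, ?_⟩
  ext i j
  fin_cases i <;> fin_cases j <;> simp [symmetricOfOffDiag] <;> omega

lemma symmetricOfOffDiag_isSymm_rowSum {r : ℕ} {p : ℕ × ℕ × ℕ}
    (hp : p ∈ triplesPairwiseSumLe r) :
    (symmetricOfOffDiag r p).IsSymm ∧ ∀ i, ∑ j, symmetricOfOffDiag r p i j = r := by
  rw [mem_triplesPairwiseSumLe] at hp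
  refine ⟨Matrix.IsSymm.ext fun i j => ?_, fun i => ?_⟩
  · fin_cases i <;> fin_cases j <;> rfl
  · fin_cases i <;> simp [symmetricOfOffDiag, Fin.sum_univ_three] <;> omega

def symmetricRowSumEquiv (r : ℕ) :
    {M : Matrix (Fin 3) (Fin 3) ℕ // M.IsSymm ∧ ∀ i, ∑ j, M i j = r} ≃ triplesPairwiseSumLe r where
  toFun M :=
    ⟨(M.1 0 1, M.1 0 2, M.1 1 2), (offDiag_mem_and_eq_symmetricOfOffDiag M.2.1 M.2.2).1⟩
  invFun p := ⟨symmetricOfOffDiag r p, symmetricOfOffDiag_isSymm_rowSum p.2⟩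
  left_inv M := Subtype.ext (offDiag_mem_and_eq_symmetricOfOffDiag M.2.1 M.2.2).2.symm
  right_inv _ := rfl

/-- The number of 3×3 symmetric matrices with nonnegative integer entries whose
rows all sum to `r`. -/
theorem symmetric_magic3_count (r : ℕ) :
    (Nat.card {M : Matrix (Fin 3) (Fin 3) ℕ //
        M.IsSymm ∧ ∀ i, ∑ j, M i j = r} : ℚ) =
      if Even r then (1/4) * (r:ℚ)^3 + (9/8) * (r:ℚ)^2 + (7/4) * (r:ℚ) + 1
      else (1/4) * (r:ℚ)^3 + (9/8) * (r:ℚ)^2 + (7/4) * (r:ℚ) + 7/8 := by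
  rw [Nat.card_congr (symmetricRowSumEquiv r), Nat.card_eq_finsetCard]
  have hℚ : (8 : ℚ) * #(triplesPairwiseSumLe r) =
      ((2 * r ^ 3 + 9 * r ^ 2 + 14 * r + if Even r then 8 else 7 : ℕ) : ℚ) := by
    exact_mod_cast eight_mul_card_triplesPairwiseSumLe r
  split_ifs at hℚ ⊢ <;> push_cast at hℚ <;> linarith
end

section
/- Let M be an 8×8 Franklin square of magic sum s. Then the 16×16 square T obtained by tiling a 2×2 arrangement of copies of M (T(i,j) = M(i mod 8, j mod 8)) is a 16×16 Franklin square of magic sum 2s: every row and column of T sums to 2s, every half-row and half-column sums to s, and every 2×2 subsquare sums to s/2. -/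
/-- The bent-diagonal offset function for an 8×8 square: 0,1,2,3,3,2,1,0. -/
def bent8 (k : Fin 8) : Fin 8 := if (k : ℕ) < 4 then k else (7 : Fin 8) - k

/-- An 8×8 Franklin square of magic sum `s`: all rows and columns sum to `s`,
all half-rows and half-columns sum to `s/2`, all (cyclically translated) bent
diagonals in all four orientations sum to `s`, and all 2×2 subsquares (on the
torus) sum to `s/2`. -/
def IsFranklin8 (s : ℕ) (M : Fin 8 → Fin 8 → ℕ) : Prop :=
  (∀ i, ∑ j, M i j = s) ∧ (∀ j, ∑ i, M i j = s) ∧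
  (∀ i, 2 * ∑ j ∈ Finset.univ.filter (fun j : Fin 8 => (j : ℕ) < 4), M i j = s) ∧
  (∀ i, 2 * ∑ j ∈ Finset.univ.filter (fun j : Fin 8 => 4 ≤ (j : ℕ)), M i j = s) ∧
  (∀ j, 2 * ∑ i ∈ Finset.univ.filter (fun i : Fin 8 => (i : ℕ) < 4), M i j = s) ∧
  (∀ j, 2 * ∑ i ∈ Finset.univ.filter (fun i : Fin 8 => 4 ≤ (i : ℕ)), M i j = s) ∧
  (∀ i j, 2 * (M i j + M i (j + 1) + M (i + 1) j + M (i + 1) (j + 1)) = s) ∧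
  (∀ c, ∑ k, M k (c + bent8 k) = s) ∧ (∀ c, ∑ k, M k (c - bent8 k) = s) ∧
  (∀ c, ∑ k, M (c + bent8 k) k = s) ∧ (∀ c, ∑ k, M (c - bent8 k) k = s)

/-- The bent-diagonal offset function for a 16×16 square. -/
def bent16 (k : Fin 16) : Fin 16 := if (k : ℕ) < 8 then k else (15 : Fin 16) - k

/-- A 16×16 Franklin square of magic sum `S`: rows, columns and bent diagonals
sum to `S`, half-rows and half-columns sum to `S/2`, and 2×2 subsquares (on the
torus) sum to `S/4`. -/
def IsFranklin16 (s : ℕ) (M : Fin 16 → Fin 16 → ℕ) : Prop :=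
  (∀ i, ∑ j, M i j = s) ∧ (∀ j, ∑ i, M i j = s) ∧
  (∀ i, 2 * ∑ j ∈ Finset.univ.filter (fun j : Fin 16 => (j : ℕ) < 8), M i j = s) ∧
  (∀ i, 2 * ∑ j ∈ Finset.univ.filter (fun j : Fin 16 => 8 ≤ (j : ℕ)), M i j = s) ∧
  (∀ j, 2 * ∑ i ∈ Finset.univ.filter (fun i : Fin 16 => (i : ℕ) < 8), M i j = s) ∧
  (∀ j, 2 * ∑ i ∈ Finset.univ.filter (fun i : Fin 16 => 8 ≤ (i : ℕ)), M i j = s) ∧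
  (∀ i j, 4 * (M i j + M i (j + 1) + M (i + 1) j + M (i + 1) (j + 1)) = s) ∧
  (∀ c, ∑ k, M k (c + bent16 k) = s) ∧ (∀ c, ∑ k, M k (c - bent16 k) = s) ∧
  (∀ c, ∑ k, M (c + bent16 k) k = s) ∧ (∀ c, ∑ k, M (c - bent16 k) k = s)

/-- Reduction of an index mod 8. -/
def mod8 (i : Fin 16) : Fin 8 := ⟨(i : ℕ) % 8, Nat.mod_lt _ (by norm_num)⟩

@[simp] lemma fsucc_1_0 : Fin.succ (0 : Fin 1) = (1 : Fin 2) := rfl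
@[simp] lemma fsucc_2_0 : Fin.succ (0 : Fin 2) = (1 : Fin 3) := rfl
@[simp] lemma fsucc_2_1 : Fin.succ (1 : Fin 2) = (2 : Fin 3) := rfl
@[simp] lemma fsucc_3_0 : Fin.succ (0 : Fin 3) = (1 : Fin 4) := rfl
@[simp] lemma fsucc_3_1 : Fin.succ (1 : Fin 3) = (2 : Fin 4) := rfl
@[simp] lemma fsucc_3_2 : Fin.succ (2 : Fin 3) = (3 : Fin 4) := rfl
@[simp] lemma fsucc_4_0 : Fin.succ (0 : Fin 4) = (1 : Fin 5) := rfl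
@[simp] lemma fsucc_4_1 : Fin.succ (1 : Fin 4) = (2 : Fin 5) := rfl
@[simp] lemma fsucc_4_2 : Fin.succ (2 : Fin 4) = (3 : Fin 5) := rfl
@[simp] lemma fsucc_4_3 : Fin.succ (3 : Fin 4) = (4 : Fin 5) := rfl
@[simp] lemma fsucc_5_0 : Fin.succ (0 : Fin 5) = (1 : Fin 6) := rfl
@[simp] lemma fsucc_5_1 : Fin.succ (1 : Fin 5) = (2 : Fin 6) := rfl
@[simp] lemma fsucc_5_2 : Fin.succ (2 : Fin 5) = (3 : Fin 6) := rfl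
@[simp] lemma fsucc_5_3 : Fin.succ (3 : Fin 5) = (4 : Fin 6) := rfl
@[simp] lemma fsucc_5_4 : Fin.succ (4 : Fin 5) = (5 : Fin 6) := rfl
@[simp] lemma fsucc_6_0 : Fin.succ (0 : Fin 6) = (1 : Fin 7) := rfl
@[simp] lemma fsucc_6_1 : Fin.succ (1 : Fin 6) = (2 : Fin 7) := rfl
@[simp] lemma fsucc_6_2 : Fin.succ (2 : Fin 6) = (3 : Fin 7) := rfl
@[simp] lemma fsucc_6_3 : Fin.succ (3 : Fin 6) = (4 : Fin 7) := rfl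
@[simp] lemma fsucc_6_4 : Fin.succ (4 : Fin 6) = (5 : Fin 7) := rfl
@[simp] lemma fsucc_6_5 : Fin.succ (5 : Fin 6) = (6 : Fin 7) := rfl
@[simp] lemma fsucc_7_0 : Fin.succ (0 : Fin 7) = (1 : Fin 8) := rfl
@[simp] lemma fsucc_7_1 : Fin.succ (1 : Fin 7) = (2 : Fin 8) := rfl
@[simp] lemma fsucc_7_2 : Fin.succ (2 : Fin 7) = (3 : Fin 8) := rfl
@[simp] lemma fsucc_7_3 : Fin.succ (3 : Fin 7) = (4 : Fin 8) := rfl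
@[simp] lemma fsucc_7_4 : Fin.succ (4 : Fin 7) = (5 : Fin 8) := rfl
@[simp] lemma fsucc_7_5 : Fin.succ (5 : Fin 7) = (6 : Fin 8) := rfl
@[simp] lemma fsucc_7_6 : Fin.succ (6 : Fin 7) = (7 : Fin 8) := rfl
@[simp] lemma fsucc_8_0 : Fin.succ (0 : Fin 8) = (1 : Fin 9) := rfl
@[simp] lemma fsucc_8_1 : Fin.succ (1 : Fin 8) = (2 : Fin 9) := rfl
@[simp] lemma fsucc_8_2 : Fin.succ (2 : Fin 8) = (3 : Fin 9) := rfl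
@[simp] lemma fsucc_8_3 : Fin.succ (3 : Fin 8) = (4 : Fin 9) := rfl
@[simp] lemma fsucc_8_4 : Fin.succ (4 : Fin 8) = (5 : Fin 9) := rfl
@[simp] lemma fsucc_8_5 : Fin.succ (5 : Fin 8) = (6 : Fin 9) := rfl
@[simp] lemma fsucc_8_6 : Fin.succ (6 : Fin 8) = (7 : Fin 9) := rfl
@[simp] lemma fsucc_8_7 : Fin.succ (7 : Fin 8) = (8 : Fin 9) := rfl
@[simp] lemma fsucc_9_0 : Fin.succ (0 : Fin 9) = (1 : Fin 10) := rfl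
@[simp] lemma fsucc_9_1 : Fin.succ (1 : Fin 9) = (2 : Fin 10) := rfl
@[simp] lemma fsucc_9_2 : Fin.succ (2 : Fin 9) = (3 : Fin 10) := rfl
@[simp] lemma fsucc_9_3 : Fin.succ (3 : Fin 9) = (4 : Fin 10) := rfl
@[simp] lemma fsucc_9_4 : Fin.succ (4 : Fin 9) = (5 : Fin 10) := rfl
@[simp] lemma fsucc_9_5 : Fin.succ (5 : Fin 9) = (6 : Fin 10) := rfl
@[simp] lemma fsucc_9_6 : Fin.succ (6 : Fin 9) = (7 : Fin 10) := rfl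
@[simp] lemma fsucc_9_7 : Fin.succ (7 : Fin 9) = (8 : Fin 10) := rfl
@[simp] lemma fsucc_9_8 : Fin.succ (8 : Fin 9) = (9 : Fin 10) := rfl
@[simp] lemma fsucc_10_0 : Fin.succ (0 : Fin 10) = (1 : Fin 11) := rfl
@[simp] lemma fsucc_10_1 : Fin.succ (1 : Fin 10) = (2 : Fin 11) := rfl
@[simp] lemma fsucc_10_2 : Fin.succ (2 : Fin 10) = (3 : Fin 11) := rfl
@[simp] lemma fsucc_10_3 : Fin.succ (3 : Fin 10) = (4 : Fin 11) := rfl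
@[simp] lemma fsucc_10_4 : Fin.succ (4 : Fin 10) = (5 : Fin 11) := rfl
@[simp] lemma fsucc_10_5 : Fin.succ (5 : Fin 10) = (6 : Fin 11) := rfl
@[simp] lemma fsucc_10_6 : Fin.succ (6 : Fin 10) = (7 : Fin 11) := rfl
@[simp] lemma fsucc_10_7 : Fin.succ (7 : Fin 10) = (8 : Fin 11) := rfl
@[simp] lemma fsucc_10_8 : Fin.succ (8 : Fin 10) = (9 : Fin 11) := rfl
@[simp] lemma fsucc_10_9 : Fin.succ (9 : Fin 10) = (10 : Fin 11) := rfl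
@[simp] lemma fsucc_11_0 : Fin.succ (0 : Fin 11) = (1 : Fin 12) := rfl
@[simp] lemma fsucc_11_1 : Fin.succ (1 : Fin 11) = (2 : Fin 12) := rfl
@[simp] lemma fsucc_11_2 : Fin.succ (2 : Fin 11) = (3 : Fin 12) := rfl
@[simp] lemma fsucc_11_3 : Fin.succ (3 : Fin 11) = (4 : Fin 12) := rfl
@[simp] lemma fsucc_11_4 : Fin.succ (4 : Fin 11) = (5 : Fin 12) := rfl
@[simp] lemma fsucc_11_5 : Fin.succ (5 : Fin 11) = (6 : Fin 12) := rfl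
@[simp] lemma fsucc_11_6 : Fin.succ (6 : Fin 11) = (7 : Fin 12) := rfl
@[simp] lemma fsucc_11_7 : Fin.succ (7 : Fin 11) = (8 : Fin 12) := rfl
@[simp] lemma fsucc_11_8 : Fin.succ (8 : Fin 11) = (9 : Fin 12) := rfl
@[simp] lemma fsucc_11_9 : Fin.succ (9 : Fin 11) = (10 : Fin 12) := rfl
@[simp] lemma fsucc_11_10 : Fin.succ (10 : Fin 11) = (11 : Fin 12) := rfl
@[simp] lemma fsucc_12_0 : Fin.succ (0 : Fin 12) = (1 : Fin 13) := rfl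
@[simp] lemma fsucc_12_1 : Fin.succ (1 : Fin 12) = (2 : Fin 13) := rfl
@[simp] lemma fsucc_12_2 : Fin.succ (2 : Fin 12) = (3 : Fin 13) := rfl
@[simp] lemma fsucc_12_3 : Fin.succ (3 : Fin 12) = (4 : Fin 13) := rfl
@[simp] lemma fsucc_12_4 : Fin.succ (4 : Fin 12) = (5 : Fin 13) := rfl
@[simp] lemma fsucc_12_5 : Fin.succ (5 : Fin 12) = (6 : Fin 13) := rfl
@[simp] lemma fsucc_12_6 : Fin.succ (6 : Fin 12) = (7 : Fin 13) := rfl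
@[simp] lemma fsucc_12_7 : Fin.succ (7 : Fin 12) = (8 : Fin 13) := rfl
@[simp] lemma fsucc_12_8 : Fin.succ (8 : Fin 12) = (9 : Fin 13) := rfl
@[simp] lemma fsucc_12_9 : Fin.succ (9 : Fin 12) = (10 : Fin 13) := rfl
@[simp] lemma fsucc_12_10 : Fin.succ (10 : Fin 12) = (11 : Fin 13) := rfl
@[simp] lemma fsucc_12_11 : Fin.succ (11 : Fin 12) = (12 : Fin 13) := rfl
@[simp] lemma fsucc_13_0 : Fin.succ (0 : Fin 13) = (1 : Fin 14) := rfl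
@[simp] lemma fsucc_13_1 : Fin.succ (1 : Fin 13) = (2 : Fin 14) := rfl
@[simp] lemma fsucc_13_2 : Fin.succ (2 : Fin 13) = (3 : Fin 14) := rfl
@[simp] lemma fsucc_13_3 : Fin.succ (3 : Fin 13) = (4 : Fin 14) := rfl
@[simp] lemma fsucc_13_4 : Fin.succ (4 : Fin 13) = (5 : Fin 14) := rfl
@[simp] lemma fsucc_13_5 : Fin.succ (5 : Fin 13) = (6 : Fin 14) := rfl
@[simp] lemma fsucc_13_6 : Fin.succ (6 : Fin 13) = (7 : Fin 14) := rfl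
@[simp] lemma fsucc_13_7 : Fin.succ (7 : Fin 13) = (8 : Fin 14) := rfl
@[simp] lemma fsucc_13_8 : Fin.succ (8 : Fin 13) = (9 : Fin 14) := rfl
@[simp] lemma fsucc_13_9 : Fin.succ (9 : Fin 13) = (10 : Fin 14) := rfl
@[simp] lemma fsucc_13_10 : Fin.succ (10 : Fin 13) = (11 : Fin 14) := rfl
@[simp] lemma fsucc_13_11 : Fin.succ (11 : Fin 13) = (12 : Fin 14) := rfl
@[simp] lemma fsucc_13_12 : Fin.succ (12 : Fin 13) = (13 : Fin 14) := rfl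
@[simp] lemma fsucc_14_0 : Fin.succ (0 : Fin 14) = (1 : Fin 15) := rfl
@[simp] lemma fsucc_14_1 : Fin.succ (1 : Fin 14) = (2 : Fin 15) := rfl
@[simp] lemma fsucc_14_2 : Fin.succ (2 : Fin 14) = (3 : Fin 15) := rfl
@[simp] lemma fsucc_14_3 : Fin.succ (3 : Fin 14) = (4 : Fin 15) := rfl
@[simp] lemma fsucc_14_4 : Fin.succ (4 : Fin 14) = (5 : Fin 15) := rfl
@[simp] lemma fsucc_14_5 : Fin.succ (5 : Fin 14) = (6 : Fin 15) := rfl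
@[simp] lemma fsucc_14_6 : Fin.succ (6 : Fin 14) = (7 : Fin 15) := rfl
@[simp] lemma fsucc_14_7 : Fin.succ (7 : Fin 14) = (8 : Fin 15) := rfl
@[simp] lemma fsucc_14_8 : Fin.succ (8 : Fin 14) = (9 : Fin 15) := rfl
@[simp] lemma fsucc_14_9 : Fin.succ (9 : Fin 14) = (10 : Fin 15) := rfl
@[simp] lemma fsucc_14_10 : Fin.succ (10 : Fin 14) = (11 : Fin 15) := rfl
@[simp] lemma fsucc_14_11 : Fin.succ (11 : Fin 14) = (12 : Fin 15) := rfl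
@[simp] lemma fsucc_14_12 : Fin.succ (12 : Fin 14) = (13 : Fin 15) := rfl
@[simp] lemma fsucc_14_13 : Fin.succ (13 : Fin 14) = (14 : Fin 15) := rfl
@[simp] lemma fsucc_15_0 : Fin.succ (0 : Fin 15) = (1 : Fin 16) := rfl
@[simp] lemma fsucc_15_1 : Fin.succ (1 : Fin 15) = (2 : Fin 16) := rfl
@[simp] lemma fsucc_15_2 : Fin.succ (2 : Fin 15) = (3 : Fin 16) := rfl
@[simp] lemma fsucc_15_3 : Fin.succ (3 : Fin 15) = (4 : Fin 16) := rfl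
@[simp] lemma fsucc_15_4 : Fin.succ (4 : Fin 15) = (5 : Fin 16) := rfl
@[simp] lemma fsucc_15_5 : Fin.succ (5 : Fin 15) = (6 : Fin 16) := rfl
@[simp] lemma fsucc_15_6 : Fin.succ (6 : Fin 15) = (7 : Fin 16) := rfl
@[simp] lemma fsucc_15_7 : Fin.succ (7 : Fin 15) = (8 : Fin 16) := rfl
@[simp] lemma fsucc_15_8 : Fin.succ (8 : Fin 15) = (9 : Fin 16) := rfl
@[simp] lemma fsucc_15_9 : Fin.succ (9 : Fin 15) = (10 : Fin 16) := rfl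
@[simp] lemma fsucc_15_10 : Fin.succ (10 : Fin 15) = (11 : Fin 16) := rfl
@[simp] lemma fsucc_15_11 : Fin.succ (11 : Fin 15) = (12 : Fin 16) := rfl
@[simp] lemma fsucc_15_12 : Fin.succ (12 : Fin 15) = (13 : Fin 16) := rfl
@[simp] lemma fsucc_15_13 : Fin.succ (13 : Fin 15) = (14 : Fin 16) := rfl
@[simp] lemma fsucc_15_14 : Fin.succ (14 : Fin 15) = (15 : Fin 16) := rfl
@[simp] lemma mod8_0 : mod8 0 = 0 := rfl
@[simp] lemma mod8_1 : mod8 1 = 1 := rfl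
@[simp] lemma mod8_2 : mod8 2 = 2 := rfl
@[simp] lemma mod8_3 : mod8 3 = 3 := rfl
@[simp] lemma mod8_4 : mod8 4 = 4 := rfl
@[simp] lemma mod8_5 : mod8 5 = 5 := rfl
@[simp] lemma mod8_6 : mod8 6 = 6 := rfl
@[simp] lemma mod8_7 : mod8 7 = 7 := rfl
@[simp] lemma mod8_8 : mod8 8 = 0 := rfl
@[simp] lemma mod8_9 : mod8 9 = 1 := rfl
@[simp] lemma mod8_10 : mod8 10 = 2 := rfl
@[simp] lemma mod8_11 : mod8 11 = 3 := rfl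
@[simp] lemma mod8_12 : mod8 12 = 4 := rfl
@[simp] lemma mod8_13 : mod8 13 = 5 := rfl
@[simp] lemma mod8_14 : mod8 14 = 6 := rfl
@[simp] lemma mod8_15 : mod8 15 = 7 := rfl
@[simp] lemma val16_0 : ((0 : Fin 16) : Nat) = 0 := rfl
@[simp] lemma val16_1 : ((1 : Fin 16) : Nat) = 1 := rfl
@[simp] lemma val16_2 : ((2 : Fin 16) : Nat) = 2 := rfl
@[simp] lemma val16_3 : ((3 : Fin 16) : Nat) = 3 := rfl
@[simp] lemma val16_4 : ((4 : Fin 16) : Nat) = 4 := rfl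
@[simp] lemma val16_5 : ((5 : Fin 16) : Nat) = 5 := rfl
@[simp] lemma val16_6 : ((6 : Fin 16) : Nat) = 6 := rfl
@[simp] lemma val16_7 : ((7 : Fin 16) : Nat) = 7 := rfl
@[simp] lemma val16_8 : ((8 : Fin 16) : Nat) = 8 := rfl
@[simp] lemma val16_9 : ((9 : Fin 16) : Nat) = 9 := rfl
@[simp] lemma val16_10 : ((10 : Fin 16) : Nat) = 10 := rfl
@[simp] lemma val16_11 : ((11 : Fin 16) : Nat) = 11 := rfl
@[simp] lemma val16_12 : ((12 : Fin 16) : Nat) = 12 := rfl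
@[simp] lemma val16_13 : ((13 : Fin 16) : Nat) = 13 := rfl
@[simp] lemma val16_14 : ((14 : Fin 16) : Nat) = 14 := rfl
@[simp] lemma val16_15 : ((15 : Fin 16) : Nat) = 15 := rfl
@[simp] lemma bent8_0 : bent8 0 = 0 := rfl
@[simp] lemma bent8_1 : bent8 1 = 1 := rfl
@[simp] lemma bent8_2 : bent8 2 = 2 := rfl
@[simp] lemma bent8_3 : bent8 3 = 3 := rfl
@[simp] lemma bent8_4 : bent8 4 = 3 := rfl
@[simp] lemma bent8_5 : bent8 5 = 2 := rfl
@[simp] lemma bent8_6 : bent8 6 = 1 := rfl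
@[simp] lemma bent8_7 : bent8 7 = 0 := rfl
@[simp] lemma bent16_0 : bent16 0 = 0 := rfl
@[simp] lemma bent16_1 : bent16 1 = 1 := rfl
@[simp] lemma bent16_2 : bent16 2 = 2 := rfl
@[simp] lemma bent16_3 : bent16 3 = 3 := rfl
@[simp] lemma bent16_4 : bent16 4 = 4 := rfl
@[simp] lemma bent16_5 : bent16 5 = 5 := rfl
@[simp] lemma bent16_6 : bent16 6 = 6 := rfl
@[simp] lemma bent16_7 : bent16 7 = 7 := rfl
@[simp] lemma bent16_8 : bent16 8 = 7 := rfl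
@[simp] lemma bent16_9 : bent16 9 = 6 := rfl
@[simp] lemma bent16_10 : bent16 10 = 5 := rfl
@[simp] lemma bent16_11 : bent16 11 = 4 := rfl
@[simp] lemma bent16_12 : bent16 12 = 3 := rfl
@[simp] lemma bent16_13 : bent16 13 = 2 := rfl
@[simp] lemma bent16_14 : bent16 14 = 1 := rfl
@[simp] lemma bent16_15 : bent16 15 = 0 := rfl
@[simp] lemma norm_p1 : ∀ x : Fin 8, x + 7 - 1 = x + 6 := by decide
@[simp] lemma norm_m1 : ∀ x : Fin 8, x - 7 + 1 = x - 6 := by decide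
@[simp] lemma norm_p2 : ∀ x : Fin 8, x + 7 - 2 = x + 5 := by decide
@[simp] lemma norm_m2 : ∀ x : Fin 8, x - 7 + 2 = x - 5 := by decide
@[simp] lemma norm_p3 : ∀ x : Fin 8, x + 7 - 3 = x + 4 := by decide
@[simp] lemma norm_m3 : ∀ x : Fin 8, x - 7 + 3 = x - 4 := by decide
@[simp] lemma mod8_add : ∀ a b : Fin 16, mod8 (a + b) = mod8 a + mod8 b := by decide
@[simp] lemma mod8_sub : ∀ a b : Fin 16, mod8 (a - b) = mod8 a - mod8 b := by decide

lemma sum16 (f : Fin 16 → ℕ) : ∑ k, f k =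
    f 0 + f 1 + f 2 + f 3 + f 4 + f 5 + f 6 + f 7 +
    (f 8 + f 9 + f 10 + f 11 + f 12 + f 13 + f 14 + f 15) := by
  simp [Fin.sum_univ_succ]; ring

lemma sum8 (f : Fin 8 → ℕ) : ∑ k, f k =
    f 0 + f 1 + f 2 + f 3 + f 4 + f 5 + f 6 + f 7 := by
  simp [Fin.sum_univ_succ]; ring
/-- Tiling a 2×2 arrangement of copies of an 8×8 Franklin square of magic sum `s`
yields a 16×16 Franklin square of magic sum `2s`. -/
theorem franklin8_tiles_to_franklin16 (s : ℕ) (M : Fin 8 → Fin 8 → ℕ)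
    (h : IsFranklin8 s M) :
    IsFranklin16 (2 * s) (fun i j => M (mod8 i) (mod8 j)) := by
  obtain ⟨h1, h2, h3, h4, h5, h6, h7, h8, h9, h10, h11⟩ := h
  refine ⟨fun i => ?_, fun j => ?_, fun i => ?_, fun i => ?_, fun j => ?_, fun j => ?_,
    fun i j => ?_, fun c => ?_, fun c => ?_, fun c => ?_, fun c => ?_⟩
  · have e := h1 (mod8 i); rw [sum8] at e
    rw [sum16]; simp; omega
  · have e := h2 (mod8 j); rw [sum8] at e
    rw [sum16]; simp; omega
  · have e := h1 (mod8 i); rw [sum8] at e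
    rw [Finset.sum_filter, sum16]; simp; omega
  · have e := h1 (mod8 i); rw [sum8] at e
    rw [Finset.sum_filter, sum16]; simp; omega
  · have e := h2 (mod8 j); rw [sum8] at e
    rw [Finset.sum_filter, sum16]; simp; omega
  · have e := h2 (mod8 j); rw [sum8] at e
    rw [Finset.sum_filter, sum16]; simp; omega
  · have e := h7 (mod8 i) (mod8 j)
    simp only [mod8_add, mod8_1]; omega
  · have e1 := h8 (mod8 c); have e2 := h9 (mod8 c + 7)
    rw [sum8] at e1 e2; simp at e1 e2
    rw [sum16]; simp; omega
  · have e1 := h9 (mod8 c); have e2 := h8 (mod8 c - 7)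
    rw [sum8] at e1 e2; simp at e1 e2
    rw [sum16]; simp; omega
  · have e1 := h10 (mod8 c); have e2 := h11 (mod8 c + 7)
    rw [sum8] at e1 e2; simp at e1 e2
    rw [sum16]; simp; omega
  · have e1 := h11 (mod8 c); have e2 := h10 (mod8 c - 7)
    rw [sum8] at e1 e2; simp at e1 e2
    rw [sum16]; simp; omega
end
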